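/- Suppose R is a ring such that for every right ideal K, R ⊕ K ≅ R ⊕ R implies K ≅ R (as right R-modules). If M ≅ R/aR with a ∈ R left cancellative and π_M : R → M is any epimorphism, then ker(π_M) = a'R for some left cancellative element a' ∈ R. -/

import Mathlib

/-!
The given epimorphism `R → M ≅ R/aR` and the canonical one `R → R/aR` are two presentations of the
same module by the projective module `R`, so Schanuel's lemma gives `ker π_M ⊕ R ≅ aR ⊕ R`. Left
multiplication by the left cancellative `a` is an isomorphism `R ≅ aR`, hence `R ⊕ ker π_M ≅ R ⊕ R`
and, by the hypothesis on `R`, `ker π_M ≅ R`. Any isomorphism `φ : R ≅ K` onto a right ideal is left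
multiplication by `a' = φ 1`, so `K = a'R` with `a'` left cancellative.
-/

open Submodule LinearMap Function

section Schanuel

variable {S P₁ P₂ N : Type*} [Ring S] [AddCommGroup P₁] [AddCommGroup P₂] [AddCommGroup N]
  [Module S P₁] [Module S P₂] [Module S N] {π₁ : P₁ →ₗ[S] N} {π₂ : P₂ →ₗ[S] N}

def LinearMap.kerProdEquivOfLifts (f : P₂ →ₗ[S] P₁) (g : P₁ →ₗ[S] P₂)
    (hf : π₁ ∘ₗ f = π₂) (hg : π₂ ∘ₗ g = π₁) : (ker π₁ × P₂) ≃ₗ[S] (ker π₂ × P₁) where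
  toFun p := (⟨p.2 - g (p.1 + f p.2), by
      rw [mem_ker, map_sub, ← comp_apply, hg, map_add, ← comp_apply π₁ f, hf,
        mem_ker.1 p.1.2, zero_add, sub_self]⟩, p.1 + f p.2)
  invFun p := (⟨p.2 - f (p.1 + g p.2), by
      rw [mem_ker, map_sub, ← comp_apply, hf, map_add, ← comp_apply π₂ g, hg,
        mem_ker.1 p.1.2, zero_add, sub_self]⟩, p.1 + g p.2)
  map_add' p q := by ext <;> simp only [Prod.fst_add, Prod.snd_add, coe_add, map_add] <;> abel
  map_smul' c p := by ext <;> simp [smul_sub]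
  left_inv p := by ext <;> simp
  right_inv p := by ext <;> simp

theorem Module.schanuel [Module.Projective S P₁] [Module.Projective S P₂]
    (hπ₁ : Surjective π₁) (hπ₂ : Surjective π₂) :
    Nonempty ((ker π₁ × P₂) ≃ₗ[S] (ker π₂ × P₁)) :=
  have ⟨f, hf⟩ := Module.projective_lifting_property π₁ π₂ hπ₁
  have ⟨g, hg⟩ := Module.projective_lifting_property π₂ π₁ hπ₂
  ⟨kerProdEquivOfLifts f g hf hg⟩

end Schanuel

section RightIdeal

variable {R : Type*} [Ring R]

instance : Module.Projective Rᵐᵒᵖ R := .of_equiv (MulOpposite.opLinearEquiv Rᵐᵒᵖ).symm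

theorem DistribSMul.range_toLinearMap_eq_span_singleton (a : R) :
    range (DistribSMul.toLinearMap Rᵐᵒᵖ R a) = span Rᵐᵒᵖ {a} := by
  ext x
  simp only [mem_range, mem_span_singleton, MulOpposite.exists, op_smul_eq_mul]
  rfl

theorem LinearMap.eq_toLinearMap_apply_one (f : R →ₗ[Rᵐᵒᵖ] R) :
    f = DistribSMul.toLinearMap Rᵐᵒᵖ R (f 1) := by
  refine LinearMap.ext fun x => ?_
  calc f x = f (MulOpposite.op x • 1) := by rw [op_smul_eq_mul, one_mul]
    _ = f 1 * x := by rw [map_smul, op_smul_eq_mul]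

theorem Submodule.nonempty_linearEquiv_iff_eq_span_singleton (K : Submodule Rᵐᵒᵖ R) :
    Nonempty (K ≃ₗ[Rᵐᵒᵖ] R) ↔ ∃ a : R, IsLeftRegular a ∧ K = span Rᵐᵒᵖ {a} := by
  constructor
  · rintro ⟨φ⟩
    set f := K.subtype ∘ₗ φ.symm.toLinearMap
    have hf : f = DistribSMul.toLinearMap Rᵐᵒᵖ R (f 1) := f.eq_toLinearMap_apply_one
    refine ⟨f 1, ?_, ?_⟩
    · have : Injective f := K.injective_subtype.comp φ.symm.injective
      rwa [hf] at this
    · rw [← DistribSMul.range_toLinearMap_eq_span_singleton, ← hf,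
        range_comp_of_range_eq_top _ φ.symm.range, range_subtype]
  · rintro ⟨a, ha, rfl⟩
    exact ⟨((LinearEquiv.ofInjective _ ha).trans
      (.ofEq _ _ (DistribSMul.range_toLinearMap_eq_span_singleton a))).symm⟩

end RightIdeal

theorem stmt_10 {R : Type*} [Ring R]
    (hR : ∀ K : Submodule Rᵐᵒᵖ R,
      Nonempty ((R × ↥K) ≃ₗ[Rᵐᵒᵖ] (R × R)) → Nonempty (↥K ≃ₗ[Rᵐᵒᵖ] R))
    {M : Type*} [AddCommGroup M] [Module Rᵐᵒᵖ M]
    (a : R) (ha : a ≠ 0 ∧ ∀ b c : R, a * b = a * c → b = c)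
    (hM : Nonempty (M ≃ₗ[Rᵐᵒᵖ] (R ⧸ Submodule.span Rᵐᵒᵖ {a})))
    (πM : R →ₗ[Rᵐᵒᵖ] M) (hπM : Surjective πM) :
    ∃ a' : R, (a' ≠ 0 ∧ ∀ b c : R, a' * b = a' * c → b = c) ∧
      LinearMap.ker πM = Submodule.span Rᵐᵒᵖ {a'} := by
  obtain ⟨e⟩ := hM
  have : Nontrivial R := ⟨⟨a, 0, ha.1⟩⟩
  set π := e.symm.toLinearMap ∘ₗ (span Rᵐᵒᵖ {a}).mkQ
  have hker : ker π = span Rᵐᵒᵖ {a} := by rw [LinearEquiv.ker_comp, ker_mkQ]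
  obtain ⟨σ⟩ := Module.schanuel (π₂ := π) hπM (e.symm.surjective.comp (mkQ_surjective _))
  obtain ⟨τ⟩ := (nonempty_linearEquiv_iff_eq_span_singleton (ker π)).2 ⟨a, ha.2, hker⟩
  obtain ⟨ψ⟩ := hR _ ⟨(LinearEquiv.prodComm _ _ _).trans (σ.trans (τ.prodCongr (.refl _ _)))⟩
  obtain ⟨a', ha', hK⟩ := (nonempty_linearEquiv_iff_eq_span_singleton _).1 ⟨ψ⟩
  exact ⟨a', ⟨ha'.ne_zero, ha'⟩, hK⟩
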